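/- Let X̄ be a compact metric space of finite covering dimension, and let X = X̄^{ℤ^k} with the shift action of ℤ^k and the product distance d(x,y) = ∑_{a∈ℤ^k} 2^{−|a|} d(x_a, y_a), where |a| = |a₁|+⋯+|a_k|. Then the mean dimension satisfies dim(X : ℤ^k) ≤ dim X̄. -/

import Mathlib

open Set Filter

noncomputable section

/-- `P ⊆ ℝ^m` is a finite polyhedron of dimension at most `n`: a finite union of
convex hulls of finite sets of at most `n+1` points. -/
def IsPolyhedron {m : ℕ} (P : Set (EuclideanSpace ℝ (Fin m))) (n : ℕ) : Prop :=
  ∃ S : Finset (Finset (EuclideanSpace ℝ (Fin m))),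
    (∀ s ∈ S, s.card ≤ n + 1) ∧ P = ⋃ s ∈ S, convexHull ℝ (↑s : Set (EuclideanSpace ℝ (Fin m)))

/-- `WidimLE X d ε n`: there is a continuous `ε`-embedding (w.r.t. the distance
function `d`) of `X` into a finite polyhedron of dimension at most `n`. -/
def WidimLE (X : Type*) [TopologicalSpace X] (d : X → X → ℝ) (ε : ℝ) (n : ℕ) : Prop :=
  ∃ (m : ℕ) (P : Set (EuclideanSpace ℝ (Fin m))) (f : X → EuclideanSpace ℝ (Fin m)),
    IsPolyhedron P n ∧ Continuous f ∧ Set.range f ⊆ P ∧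
    ∀ x y : X, f x = f y → d x y ≤ ε

/-- Minimal dimension of a finite polyhedron admitting an `ε`-embedding of `X`. -/
def Widim (X : Type*) [TopologicalSpace X] (d : X → X → ℝ) (ε : ℝ) : ℕ :=
  sInf {n | WidimLE X d ε n}

/-- The distance `d_{I_n}(x,y) = max_{γ ∈ [0,n)^k ∩ ℤ^k} d(γ.x, γ.y)` associated to a
`ℤ^k`-action `T`. -/
def dBoxZ {X : Type*} (k : ℕ) (T : (Fin k → ℤ) → X → X) (d : X → X → ℝ)
    (n : ℕ) (x y : X) : ℝ :=
  sSup {r | ∃ γ : Fin k → ℤ, (∀ i, 0 ≤ γ i ∧ γ i < (n : ℤ)) ∧ r = d (T γ x) (T γ y)}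

/-- The mean dimension `dim(X : ℤ^k) = lim_{ε→0} lim_{n→∞} n^{-k} Widim_ε(X, d_{I_n})`
of a `ℤ^k`-action `T` on `X` (with distance function `d`), as a value in `ℝ≥0∞`. -/
def mdimZ {X : Type*} [TopologicalSpace X] (k : ℕ) (T : (Fin k → ℤ) → X → X)
    (d : X → X → ℝ) : ENNReal :=
  ⨆ (ε : ℝ) (_ : 0 < ε),
    Filter.limsup (fun n : ℕ =>
      (Widim X (dBoxZ k T d n) ε : ENNReal) / (n : ENNReal) ^ k) Filter.atTop

/-- Covering dimension `≤ n`: every open cover admits an open refinement in which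
every point lies in at most `n+1` members. -/
def CovdimLE (X : Type*) [TopologicalSpace X] (n : ℕ) : Prop :=
  ∀ 𝒰 : Set (Set X), (∀ U ∈ 𝒰, IsOpen U) → ⋃₀ 𝒰 = Set.univ →
    ∃ 𝒱 : Set (Set X), (∀ V ∈ 𝒱, IsOpen V) ∧ ⋃₀ 𝒱 = Set.univ ∧
      (∀ V ∈ 𝒱, ∃ U ∈ 𝒰, V ⊆ U) ∧
      ∀ (x : X) (S : Finset (Set X)), (↑S : Set (Set X)) ⊆ 𝒱 → (∀ V ∈ S, x ∈ V) →
        S.card ≤ n + 1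

/-- The product distance `d(x,y) = ∑_{a ∈ ℤ^k} 2^{-|a|} d(x_a, y_a)` on `X̄^{ℤ^k}`. -/
def prodDist {k : ℕ} {Xb : Type*} [PseudoMetricSpace Xb]
    (x y : (Fin k → ℤ) → Xb) : ℝ :=
  ∑' a : Fin k → ℤ, ((2 : ℝ) ^ (∑ i, (a i).natAbs))⁻¹ * dist (x a) (y a)

/-- The shift action of `ℤ^k` on `X̄^{ℤ^k}`. -/
def shiftZ {k : ℕ} {Xb : Type*} (γ : Fin k → ℤ) (x : (Fin k → ℤ) → Xb) :
    (Fin k → ℤ) → Xb :=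
  fun a => x (γ + a)

end

/-!
A compact metric space `X̄` of covering dimension `≤ D` admits, for every `δ > 0`, a continuous map
into a `D`-dimensional polyhedron whose fibres have diameter `≤ δ` (a partition of unity
subordinate to a fine open cover of order `≤ D + 1`). Since the weights `2^{-|a|}` are summable,
two points of `X̄^{ℤ^k}` whose coordinates are `δ`-close on the box `[-R, n + R)^k` are
`ε`-close for `d_{I_n}`, once `R` is large and `δ` small. Applying the map coordinatewise on that
box sends `X̄^{ℤ^k}` into a product of `(n + 2R)^k` polyhedra of dimension `D`, and by
Carathéodory's theorem a product of simplices is a union of simplices of dimension at most the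
sum of their dimensions. Hence `Widim_ε(X, d_{I_n}) ≤ (n + 2R)^k D`, and dividing by `n^k`
gives the bound.
-/
lemma finrank_vectorSpan_finset_le {k V : Type*} [DivisionRing k] [AddCommGroup V] [Module k V]
    [DecidableEq V] (s : Finset V) :
    Module.finrank k (vectorSpan k (s : Set V)) ≤ s.card - 1 := by
  rcases s.eq_empty_or_nonempty with rfl | hs
  · rw [Finset.coe_empty, vectorSpan_empty, finrank_bot]
    exact Nat.zero_le _
  · have := finrank_vectorSpan_image_finset_le k id s (n := s.card - 1)
      (by have := hs.card_pos; omega)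
    rwa [Finset.image_id] at this

section Skeleton

variable {E : Type*} [AddCommGroup E] [Module ℝ E]

/-- For affinely independent `T`, the `n`-skeleton of the simplex spanned by `T`. -/
def simplexSkeleton (T : Finset E) (n : ℕ) : Set E :=
  ⋃ (s : Finset E) (_ : s ⊆ T) (_ : s.card ≤ n + 1), convexHull ℝ (s : Set E)

lemma mem_simplexSkeleton {T : Finset E} {n : ℕ} {x : E} :
    x ∈ simplexSkeleton T n ↔ ∃ s ⊆ T, s.card ≤ n + 1 ∧ x ∈ convexHull ℝ (s : Set E) := by
  simp only [simplexSkeleton, mem_iUnion, exists_prop]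

end Skeleton

section Pi

variable {β : Type*} [Fintype β] {E : β → Type*} [∀ b, AddCommGroup (E b)] [∀ b, Module ℝ (E b)]

lemma AffineIndependent.card_le_of_subset_pi {W : Finset (∀ b, E b)} {s : ∀ b, Finset (E b)}
    (hW : AffineIndependent ℝ ((↑) : W → ∀ b, E b))
    (hWs : (W : Set (∀ b, E b)) ⊆ univ.pi fun b => (s b : Set (E b))) :
    W.card ≤ ∑ b, ((s b).card - 1) + 1 := by
  classical
  have (b : β) : FiniteDimensional ℝ (vectorSpan ℝ (s b : Set (E b))) :=
    finiteDimensional_vectorSpan_of_finite ℝ (s b).finite_toSet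
  let L : (∀ b, vectorSpan ℝ (s b : Set (E b))) →ₗ[ℝ] ∀ b, E b :=
    LinearMap.pi fun b => (vectorSpan ℝ _).subtype ∘ₗ LinearMap.proj b
  have hspan : vectorSpan ℝ (range ((↑) : W → ∀ b, E b)) ≤ LinearMap.range L := by
    rw [vectorSpan_def, Submodule.span_le]
    rintro _ ⟨_, ⟨w, rfl⟩, _, ⟨w', rfl⟩, rfl⟩
    exact ⟨fun b => ⟨w.1 b - w'.1 b,
      vsub_mem_vectorSpan ℝ (hWs w.2 b trivial) (hWs w'.2 b trivial)⟩, rfl⟩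
  calc W.card = Fintype.card W := (Fintype.card_coe W).symm
    _ ≤ Module.finrank ℝ (vectorSpan ℝ (range ((↑) : W → ∀ b, E b))) + 1 :=
      hW.card_le_finrank_succ
    _ ≤ Module.finrank ℝ (LinearMap.range L) + 1 := by
      gcongr
      exact Submodule.finrank_mono hspan
    _ ≤ ∑ b, Module.finrank ℝ (vectorSpan ℝ (s b : Set (E b))) + 1 := by
      gcongr
      exact L.finrank_range_le.trans (Module.finrank_pi_fintype ℝ).le
    _ ≤ ∑ b, ((s b).card - 1) + 1 := by
      gcongr with b
      exact finrank_vectorSpan_finset_le (s b)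

lemma pi_simplexSkeleton_subset [DecidableEq β] (T : ∀ b, Finset (E b)) (n : β → ℕ) :
    univ.pi (fun b => simplexSkeleton (T b) (n b)) ⊆
      simplexSkeleton (Fintype.piFinset T) (∑ b, n b) := by
  intro x hx
  simp only [Set.mem_pi, mem_univ, true_implies, mem_simplexSkeleton] at hx
  choose s hsT hsn hxs using hx
  have hx : x ∈ convexHull ℝ (univ.pi fun b => (s b : Set (E b))) := by
    rw [convexHull_pi]
    exact fun b _ => hxs b
  -- Carathéodory
  rw [convexHull_eq_union] at hx
  simp only [mem_iUnion] at hx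
  obtain ⟨W, hWs, hW, hxW⟩ := hx
  refine mem_simplexSkeleton.2
    ⟨W, fun w hw => Fintype.mem_piFinset.2 fun b => hsT b (hWs hw b trivial), ?_, hxW⟩
  calc W.card ≤ ∑ b, ((s b).card - 1) + 1 := hW.card_le_of_subset_pi hWs
    _ ≤ ∑ b, n b + 1 := by
      gcongr with b
      have := hsn b
      omega

end Pi

lemma widimLE_of_range_subset_simplexSkeleton {X : Type*} [TopologicalSpace X]
    {d : X → X → ℝ} {ε : ℝ} {n : ℕ} {E : Type*} [NormedAddCommGroup E] [NormedSpace ℝ E]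
    [FiniteDimensional ℝ E] {T : Finset E} {f : X → E} (hf : Continuous f)
    (hfT : range f ⊆ simplexSkeleton T n) (hfib : ∀ x y, f x = f y → d x y ≤ ε) :
    WidimLE X d ε n := by
  classical
  let e : E ≃L[ℝ] EuclideanSpace ℝ (Fin (Module.finrank ℝ E)) :=
    (LinearEquiv.ofFinrankEq _ _ (by simp)).toContinuousLinearEquiv
  refine ⟨_, _, e ∘ f, ⟨(T.powerset.filter (·.card ≤ n + 1)).image (·.image e), ?_, rfl⟩,
    e.continuous.comp hf, ?_, fun x y hxy => hfib x y (e.injective hxy)⟩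
  · simp only [Finset.mem_image, Finset.mem_filter, forall_exists_index, and_imp]
    rintro _ s - hs rfl
    exact Finset.card_image_le.trans hs
  · rintro _ ⟨x, rfl⟩
    obtain ⟨s, hsT, hsn, hx⟩ := mem_simplexSkeleton.1 (hfT (mem_range_self x))
    simp only [mem_iUnion]
    refine ⟨s.image e, Finset.mem_image_of_mem _ (Finset.mem_filter.2
      ⟨Finset.mem_powerset.2 hsT, hsn⟩), ?_⟩
    rw [Finset.coe_image,
      ← IsLinearMap.image_convexHull (f := e) e.toLinearEquiv.toLinearMap.isLinear]
    exact mem_image_of_mem e hx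

lemma CovdimLE.exists_finite_refinement {X : Type*} [TopologicalSpace X] [CompactSpace X]
    {D : ℕ} (hX : CovdimLE X D) {𝒰 : Set (Set X)} (h𝒰o : ∀ U ∈ 𝒰, IsOpen U)
    (h𝒰 : ⋃₀ 𝒰 = univ) :
    ∃ (N : ℕ) (V : Fin N → Set X), (∀ i, IsOpen (V i)) ∧ (⋃ i, V i = univ) ∧
      (∀ i, ∃ U ∈ 𝒰, V i ⊆ U) ∧ ∀ x (s : Finset (Fin N)), (∀ i ∈ s, x ∈ V i) → s.card ≤ D + 1 := by
  classical
  obtain ⟨𝒱, h𝒱o, h𝒱, h𝒱𝒰, h𝒱ord⟩ := hX 𝒰 h𝒰o h𝒰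
  obtain ⟨t, ht⟩ := isCompact_univ.elim_finite_subcover (fun V : 𝒱 => (V : Set X))
    (fun V => h𝒱o V V.2) (by rw [← sUnion_eq_iUnion, h𝒱])
  let V : Fin t.card → Set X := fun i => t.equivFin.symm i
  have hVinj : Function.Injective V :=
    Subtype.val_injective.comp (Subtype.val_injective.comp t.equivFin.symm.injective)
  refine ⟨t.card, V, fun i => h𝒱o _ (t.equivFin.symm i).1.2, ?_,
    fun i => h𝒱𝒰 _ (t.equivFin.symm i).1.2, fun x s hs => ?_⟩
  · refine eq_univ_of_forall fun x => ?_
    obtain ⟨W, hWt, hxW⟩ := mem_iUnion₂.1 (ht (mem_univ x))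
    exact mem_iUnion.2 ⟨t.equivFin ⟨W, hWt⟩, by simpa [V] using hxW⟩
  · rw [← Finset.card_image_of_injective _ hVinj]
    refine h𝒱ord x _ ?_ ?_
    · intro W hW
      obtain ⟨i, -, rfl⟩ := Finset.mem_image.1 hW
      exact (t.equivFin.symm i).1.2
    · intro W hW
      obtain ⟨i, hi, rfl⟩ := Finset.mem_image.1 hW
      exact hs i hi

lemma exists_continuous_simplexSkeleton_of_cover {X ι : Type*} [TopologicalSpace X]
    [NormalSpace X] [Fintype ι] [DecidableEq ι] {D : ℕ} {V : ι → Set X}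
    (hVo : ∀ i, IsOpen (V i)) (hV : ⋃ i, V i = univ)
    (hord : ∀ x (s : Finset ι), (∀ i ∈ s, x ∈ V i) → s.card ≤ D + 1) :
    ∃ f : X → ι → ℝ, Continuous f ∧
      range f ⊆ simplexSkeleton (Finset.univ.image fun i => Pi.single i 1) D ∧
      ∀ x y, f x = f y → ∃ i, x ∈ V i ∧ y ∈ V i := by
  obtain ⟨ρ, hρV⟩ := PartitionOfUnity.exists_isSubordinate_of_locallyFinite isClosed_univ V hVo
    (locallyFinite_of_finite V) hV.ge
  have hsupp (i : ι) (x : X) (h : ρ i x ≠ 0) : x ∈ V i := hρV i (subset_tsupport _ h)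
  have hsum (x : X) : ∑ i, ρ i x = 1 := by
    rw [← finsum_eq_sum_of_fintype]
    exact ρ.sum_eq_one (mem_univ x)
  refine ⟨fun x i => ρ i x, continuous_pi fun i => (ρ i).continuous, ?_, fun x y hxy => ?_⟩
  · rintro _ ⟨x, rfl⟩
    set s := Finset.univ.filter fun i => ρ i x ≠ 0
    have hs1 : ∑ i ∈ s, ρ i x = 1 := by rw [Finset.sum_filter_ne_zero, hsum]
    refine mem_simplexSkeleton.2 ⟨s.image fun i => Pi.single i 1,
      Finset.image_subset_image (Finset.subset_univ s),
      Finset.card_image_le.trans (hord x s fun i hi => hsupp i x (Finset.mem_filter.1 hi).2), ?_⟩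
    have hcm := s.centerMass_mem_convexHull (w := fun i => ρ i x) (fun i _ => ρ.nonneg i x)
      (by rw [hs1]; exact one_pos) (z := fun i => (Pi.single i 1 : ι → ℝ))
      (fun i hi => Finset.mem_coe.2 (Finset.mem_image_of_mem _ hi))
    convert hcm using 1
    rw [Finset.centerMass_eq_of_sum_1 _ _ hs1]
    ext j
    simp [Finset.sum_apply, Pi.single_apply, s]
  · obtain ⟨i, -, hi⟩ := Finset.exists_ne_zero_of_sum_ne_zero (s := Finset.univ)
      (f := fun i => ρ i x) (by rw [hsum]; exact one_ne_zero)
    have hxy : ρ i x = ρ i y := congrFun hxy i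
    exact ⟨i, hsupp i x hi, hsupp i y (hxy ▸ hi)⟩

lemma CovdimLE.exists_continuous_simplexSkeleton_dist_le {X : Type*} [MetricSpace X]
    [CompactSpace X] {D : ℕ} (hX : CovdimLE X D) {δ : ℝ} (hδ : 0 < δ) :
    ∃ (N : ℕ) (f : X → Fin N → ℝ) (T : Finset (Fin N → ℝ)), Continuous f ∧
      range f ⊆ simplexSkeleton T D ∧ ∀ x y, f x = f y → dist x y ≤ δ := by
  obtain ⟨N, V, hVo, hV, hVball, hord⟩ := hX.exists_finite_refinement
    (𝒰 := range fun c => Metric.ball c (δ / 2)) (by rintro _ ⟨c, rfl⟩; exact Metric.isOpen_ball)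
    (eq_univ_of_forall fun x =>
      mem_sUnion.2 ⟨_, mem_range_self x, Metric.mem_ball_self (by positivity)⟩)
  obtain ⟨f, hf, hfT, hfV⟩ := exists_continuous_simplexSkeleton_of_cover hVo hV hord
  refine ⟨N, f, _, hf, hfT, fun x y hxy => ?_⟩
  obtain ⟨i, hx, hy⟩ := hfV x y hxy
  obtain ⟨_, ⟨c, rfl⟩, hVc⟩ := hVball i
  have hxc := Metric.mem_ball.1 (hVc hx)
  have hyc := Metric.mem_ball.1 (hVc hy)
  linarith [dist_triangle_right x y c]

lemma summable_inv_two_pow_sum_natAbs :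
    ∀ k : ℕ, Summable fun a : Fin k → ℤ => ((2 : ℝ) ^ ∑ i, (a i).natAbs)⁻¹
  | 0 => Summable.of_finite
  | k + 1 => by
    have hgeo : Summable fun n : ℕ => ((2 : ℝ) ^ n)⁻¹ := by
      simpa [inv_pow] using summable_geometric_two
    have hℤ : Summable fun t : ℤ => ((2 : ℝ) ^ t.natAbs)⁻¹ :=
      Summable.of_nat_of_neg (by simpa using hgeo) (by simpa using hgeo)
    have hprod := hℤ.mul_of_nonneg (summable_inv_two_pow_sum_natAbs k)
      (fun _ => by positivity) (fun _ => by positivity)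
    refine ((Fin.consEquiv fun _ => ℤ).symm.summable_iff.2 hprod).congr fun a => ?_
    simp [Fin.sum_univ_succ, Fin.tail, pow_add, mul_comm]

lemma exists_finset_tsum_mul_dist_le {α X : Type*} [PseudoMetricSpace X] [BoundedSpace X]
    {w : α → ℝ} (hw0 : ∀ a, 0 ≤ w a) (hw : Summable w) {ε : ℝ} (hε : 0 < ε) :
    ∃ s : Finset α, ∃ δ > 0, ∀ x y : α → X,
      (∀ a ∈ s, dist (x a) (y a) ≤ δ) → ∑' a, w a * dist (x a) (y a) ≤ ε := by
  set M := Metric.diam (univ : Set X)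
  have hM (x y : X) : dist x y ≤ M :=
    Metric.dist_le_diam_of_mem (Bornology.isBounded_univ.2 inferInstance) (mem_univ x) (mem_univ y)
  have hM0 : 0 ≤ M := Metric.diam_nonneg
  set C := ∑' a, w a
  have hC0 : 0 ≤ C := tsum_nonneg hw0
  obtain ⟨s, hs⟩ := ((tendsto_order.1 (tendsto_tsum_compl_atTop_zero w)).2
    (ε / (2 * (M + 1))) (by positivity)).exists
  have htail : M * ∑' a : {a // a ∉ s}, w a ≤ ε / 2 :=
    calc M * ∑' a : {a // a ∉ s}, w a ≤ (M + 1) * (ε / (2 * (M + 1))) :=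
          mul_le_mul (by linarith) hs.le (tsum_nonneg fun a => hw0 a) (by linarith)
      _ = ε / 2 := by field_simp
  set δ := ε / (2 * (C + 1))
  have hδ : 0 < δ := by positivity
  have hδC : δ * C ≤ ε / 2 :=
    calc δ * C ≤ δ * (C + 1) := by gcongr; linarith
      _ = ε / 2 := by simp only [δ]; field_simp
  refine ⟨s, δ, hδ, fun x y hxy => ?_⟩
  have hbound (a : α) :
      w a * dist (x a) (y a) ≤ δ * w a + M * ({a | a ∉ s} : Set α).indicator w a := by
    by_cases ha : a ∈ s
    · simp [ha, mul_comm δ, mul_le_mul_of_nonneg_left (hxy a ha) (hw0 a)]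
    · rw [indicator_of_mem (s := {a | a ∉ s}) ha]
      linarith [mul_le_mul_of_nonneg_left (hM (x a) (y a)) (hw0 a), mul_nonneg hδ.le (hw0 a)]
  have hind : Summable (({a | a ∉ s} : Set α).indicator w) := hw.indicator _
  calc ∑' a, w a * dist (x a) (y a)
      ≤ ∑' a, (δ * w a + M * ({a | a ∉ s} : Set α).indicator w a) :=
        Summable.tsum_le_tsum hbound
          (hw.mul_right M |>.of_nonneg_of_le (fun a => mul_nonneg (hw0 a) dist_nonneg)
            fun a => mul_le_mul_of_nonneg_left (hM _ _) (hw0 a))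
          ((hw.mul_left δ).add (hind.mul_left M))
    _ = δ * C + M * ∑' a : {a // a ∉ s}, w a := by
        rw [Summable.tsum_add (hw.mul_left δ) (hind.mul_left M), tsum_mul_left, tsum_mul_left,
          ← tsum_subtype]
        rfl
    _ ≤ ε := by linarith

lemma dBoxZ_le {X : Type*} {k : ℕ} {T : (Fin k → ℤ) → X → X} {d : X → X → ℝ} {n : ℕ}
    {x y : X} {ε : ℝ} (hε : 0 ≤ ε)
    (h : ∀ γ : Fin k → ℤ, (∀ i, 0 ≤ γ i ∧ γ i < n) → d (T γ x) (T γ y) ≤ ε) :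
    dBoxZ k T d n x y ≤ ε :=
  Real.sSup_le (by rintro _ ⟨γ, hγ, rfl⟩; exact h γ hγ) hε

lemma widimLE_shift {k : ℕ} {Xb : Type*} [MetricSpace Xb] [CompactSpace Xb] {D : ℕ}
    (hdim : CovdimLE Xb D) {ε : ℝ} (hε : 0 < ε) :
    ∃ R : ℕ, ∀ n : ℕ,
      WidimLE ((Fin k → ℤ) → Xb) (dBoxZ k shiftZ prodDist n) ε ((n + 2 * R) ^ k * D) := by
  classical
  obtain ⟨s, δ, hδ, hs⟩ := exists_finset_tsum_mul_dist_le (X := Xb)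
    (fun _ => by positivity) (summable_inv_two_pow_sum_natAbs k) hε
  obtain ⟨R, hR⟩ : ∃ R : ℕ, ∀ a ∈ s, ∀ i, (a i).natAbs ≤ R :=
    ⟨s.sup fun a => Finset.univ.sup fun i => (a i).natAbs, fun a ha i =>
      (Finset.le_sup (f := fun i => (a i).natAbs) (Finset.mem_univ i)).trans
        (Finset.le_sup (f := fun a => Finset.univ.sup fun i => (a i).natAbs) ha)⟩
  obtain ⟨N, f, T, hf, hfT, hfδ⟩ := hdim.exists_continuous_simplexSkeleton_dist_le hδ
  refine ⟨R, fun n => ?_⟩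
  set B : Finset (Fin k → ℤ) := Fintype.piFinset fun _ => Finset.Ico (-(R : ℤ)) (n + R)
  have hB : ∑ _a : B, D = (n + 2 * R) ^ k * D := by
    simp only [Finset.sum_const, Finset.card_univ, Fintype.card_coe, smul_eq_mul, B,
      Fintype.card_piFinset, Int.card_Ico, Finset.prod_const, Fintype.card_fin]
    congr
    omega
  have hshift (γ : Fin k → ℤ) (hγ : ∀ i, 0 ≤ γ i ∧ γ i < n) (a : Fin k → ℤ) (ha : a ∈ s) :
      γ + a ∈ B := by
    refine Fintype.mem_piFinset.2 fun i => Finset.mem_Ico.2 ?_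
    have := hR a ha i
    have := hγ i
    simp only [Pi.add_apply]
    omega
  rw [← hB]
  refine widimLE_of_range_subset_simplexSkeleton (f := fun x (a : B) => f (x a))
    (T := Fintype.piFinset fun _ : B => T) (continuous_pi fun a => hf.comp (continuous_apply _))
    ?_ fun x y hxy => dBoxZ_le hε.le fun γ hγ => hs _ _ fun a ha => ?_
  · rintro _ ⟨x, rfl⟩
    exact pi_simplexSkeleton_subset _ _ fun a _ => hfT (mem_range_self _)
  · exact hfδ _ _ (congrFun hxy ⟨γ + a, hshift γ hγ a ha⟩)

lemma tendsto_natCast_add_pow_mul_div_pow (k R D : ℕ) :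
    Tendsto (fun n : ℕ => (((n + R) ^ k * D : ℕ) : ENNReal) / (n : ENNReal) ^ k) atTop
      (nhds D) := by
  have hreal : Tendsto (fun n : ℕ => (1 + (R : ℝ) / n) ^ k * D) atTop (nhds D) := by
    simpa using (((tendsto_const_nhds (x := (1 : ℝ))).add
      (tendsto_const_div_atTop_nhds_zero_nat (R : ℝ))).pow k).mul_const (D : ℝ)
  refine (ENNReal.tendsto_ofReal hreal).congr' ?_ |>.trans ?_
  · filter_upwards [eventually_ge_atTop 1] with n hn
    have hn0 : (0 : ℝ) < n := by exact_mod_cast hn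
    rw [← ENNReal.ofReal_natCast, ← ENNReal.ofReal_natCast n, ← ENNReal.ofReal_pow hn0.le,
      ← ENNReal.ofReal_div_of_pos (by positivity), one_add_div hn0.ne', div_pow,
      div_mul_eq_mul_div]
    push_cast
    rfl
  · rw [ENNReal.ofReal_natCast]

lemma limsup_div_pow_le_of_le {W : ℕ → ℕ} {k R D : ℕ} (h : ∀ n, W n ≤ (n + R) ^ k * D) :
    limsup (fun n : ℕ => (W n : ENNReal) / (n : ENNReal) ^ k) atTop ≤ D :=
  (limsup_le_limsup (Eventually.of_forall fun n => by gcongr; exact_mod_cast h n)).trans_eq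
    (tendsto_natCast_add_pow_mul_div_pow k R D).limsup_eq

/-- Example 4.4 (first part): for a compact metric space `X̄` of finite covering
dimension, the shift on `X = X̄^{ℤ^k}` with the product distance has mean dimension
`dim(X : ℤ^k) ≤ dim X̄`. -/
theorem mdim_shift_le_covdim (k : ℕ) (Xb : Type*) [MetricSpace Xb] [CompactSpace Xb]
    (D : ℕ) (hdim : CovdimLE Xb D) :
    mdimZ k (shiftZ (k := k) (Xb := Xb)) prodDist ≤ (D : ENNReal) := by
  refine iSup₂_le fun ε hε => ?_
  obtain ⟨R, hR⟩ := widimLE_shift hdim hε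
  exact limsup_div_pow_le_of_le fun n => Nat.sInf_le (hR n)
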